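/- arXiv:2305.18268 — 2 statements merged into one kernel-verified Lean document; each statement's English description precedes it below -/
import Mathlib

section
/- Let P be an irreducible transition matrix on a finite state space S, reversible with respect to π, with orthonormal (in L²(π)) eigenbasis v_1=𝟙, v_2,…,v_n and eigenvalues λ_1=1 ≥ λ_2 ≥ … ≥ λ_n. If f ∈ L²₀(π) with f = Σ_i a_i v_i, then the asymptotic variance v(f,P) = lim_{N→∞} (1/N) Var_{π,P}(Σ_{i=1}^N f(X_i)) exists and equals Σ_{i=2}^n a_i² (1+λ_i)/(1-λ_i). -/
/-!
Expanding the centred function in the orthonormal eigenbasis diagonalises the autocovariances,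
`γ(k) = ∑_{i ≠ 0} a_i² λ_i^k`, so that
`(1/N) Var(∑_{t<N} f(X_t)) = ∑_{i ≠ 0} a_i² (1/N) ∑_{s,t<N} λ_i^|s-t|`.
The closed form `(1-λ)² ∑_{s,t<N} λ^|s-t| = N(1-λ²) - 2λ(1-λ^N)` shows that each normalised
double sum tends to `(1+λ)/(1-λ)` as soon as `-1 ≤ λ < 1`. These bounds hold for `i ≠ 0`:
stochasticity gives `|λ| ≤ 1`, and by the maximum principle an eigenvector for `λ = 1` of an
irreducible stochastic matrix is constant, hence a multiple of `v 0`, to which `v i` is orthogonal.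
-/

open Matrix BigOperators Filter

def IsStochastic {n : ℕ} (P : Matrix (Fin n) (Fin n) ℝ) : Prop :=
  (∀ x y, 0 ≤ P x y) ∧ ∀ x, ∑ y, P x y = 1

def IsReversible {n : ℕ} (π : Fin n → ℝ) (P : Matrix (Fin n) (Fin n) ℝ) : Prop :=
  ∀ x y, π x * P x y = π y * P y x

def MatIrreducible {n : ℕ} (P : Matrix (Fin n) (Fin n) ℝ) : Prop :=
  ∀ x y, ∃ k : ℕ, 0 < (P ^ k) x y

noncomputable def pInner {n : ℕ} (π f g : Fin n → ℝ) : ℝ := ∑ x, f x * g x * π x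

noncomputable def autocov {n : ℕ} (π : Fin n → ℝ) (P : Matrix (Fin n) (Fin n) ℝ)
    (f : Fin n → ℝ) (k : ℕ) : ℝ :=
  ∑ x, ∑ y, π x * (f x - ∑ z, π z * f z) * (P ^ k) x y * (f y - ∑ z, π z * f z)

noncomputable def varN {n : ℕ} (π : Fin n → ℝ) (P : Matrix (Fin n) (Fin n) ℝ)
    (f : Fin n → ℝ) (N : ℕ) : ℝ :=
  ((N : ℝ))⁻¹ * ∑ i ∈ Finset.range N, ∑ j ∈ Finset.range N,
    autocov π P f (max i j - min i j)

def HasAsymptVar {n : ℕ} (π : Fin n → ℝ) (P : Matrix (Fin n) (Fin n) ℝ)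
    (f : Fin n → ℝ) (v : ℝ) : Prop :=
  Tendsto (varN π P f) atTop (nhds v)

def EffDom {n : ℕ} (π : Fin n → ℝ) (P Q : Matrix (Fin n) (Fin n) ℝ) : Prop :=
  ∀ (f : Fin n → ℝ) (vP vQ : ℝ),
    HasAsymptVar π P f vP → HasAsymptVar π Q f vQ → vP ≤ vQ

open Finset

noncomputable def powDistSum (l : ℝ) (N : ℕ) : ℝ :=
  ∑ i ∈ range N, ∑ j ∈ range N, l ^ (max i j - min i j)

lemma powDistSum_succ (l : ℝ) (N : ℕ) :
    powDistSum l (N + 1) = powDistSum l N + 1 + 2 * ∑ k ∈ range N, l ^ (k + 1) := by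
  have hrow : ∑ i ∈ range N, l ^ (max i N - min i N) = ∑ k ∈ range N, l ^ (k + 1) := by
    rw [← sum_range_reflect]
    refine sum_congr rfl fun i hi => ?_
    have hiN := mem_range.1 hi
    congr 1
    omega
  have hcol : ∑ j ∈ range N, l ^ (max N j - min N j) = ∑ k ∈ range N, l ^ (k + 1) := by
    simpa only [max_comm, min_comm] using hrow
  simp only [powDistSum, sum_range_succ, sum_add_distrib, hrow, hcol, max_self, min_self,
    Nat.sub_self, pow_zero]
  ring

lemma one_sub_sq_mul_powDistSum (l : ℝ) (N : ℕ) :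
    (1 - l) ^ 2 * powDistSum l N = N * (1 - l ^ 2) - 2 * l * (1 - l ^ N) := by
  induction N with
  | zero => simp [powDistSum]
  | succ N ih =>
    have hgeom : (1 - l) * ∑ k ∈ range N, l ^ (k + 1) = l * (1 - l ^ N) := by
      simp only [pow_succ, ← sum_mul, ← mul_neg_geom_sum]
      ring
    rw [powDistSum_succ]
    push_cast
    linear_combination ih + 2 * (1 - l) * hgeom

lemma tendsto_inv_mul_powDistSum {l : ℝ} (h1 : -1 ≤ l) (h2 : l < 1) :
    Tendsto (fun N : ℕ => (N : ℝ)⁻¹ * powDistSum l N) atTop (nhds ((1 + l) / (1 - l))) := by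
  have hl : 1 - l ≠ 0 := by linarith
  have hpow : Tendsto (fun N : ℕ => l ^ N * (N : ℝ)⁻¹) atTop (nhds 0) := by
    refine squeeze_zero_norm (fun N => ?_) tendsto_inv_atTop_nhds_zero_nat
    rw [norm_mul, norm_pow, norm_inv, Real.norm_natCast]
    exact mul_le_of_le_one_left (by positivity)
      (pow_le_one₀ (norm_nonneg l) (abs_le.2 ⟨h1, h2.le⟩))
  have hlim : Tendsto (fun N : ℕ => (1 + l) / (1 - l) - 2 * l / (1 - l) ^ 2 *
      ((N : ℝ)⁻¹ - l ^ N * (N : ℝ)⁻¹)) atTop (nhds ((1 + l) / (1 - l))) := by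
    simpa using tendsto_const_nhds.sub
      ((tendsto_inv_atTop_nhds_zero_nat.sub hpow).const_mul (2 * l / (1 - l) ^ 2))
  refine hlim.congr' (eventually_atTop.2 ⟨1, fun N hN => ?_⟩)
  have hN : (N : ℝ) ≠ 0 := by positivity
  have hclosed := one_sub_sq_mul_powDistSum l N
  field_simp
  linear_combination -hclosed

lemma IsStochastic.mem_rowStochastic {n : ℕ} {P : Matrix (Fin n) (Fin n) ℝ}
    (hP : IsStochastic P) : P ∈ rowStochastic ℝ (Fin n) :=
  mem_rowStochastic_iff_sum.2 hP

lemma mulVec_pow_of_mulVec_eq_smul {ι : Type*} [Fintype ι] [DecidableEq ι]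
    {M : Matrix ι ι ℝ} {w : ι → ℝ} {l : ℝ} (h : M *ᵥ w = l • w) (k : ℕ) :
    (M ^ k) *ᵥ w = l ^ k • w := by
  induction k with
  | zero => simp
  | succ k ih => rw [pow_succ, ← mulVec_mulVec, h, mulVec_smul, ih, smul_smul, ← pow_succ']

lemma abs_le_one_of_mulVec_eq_smul {ι : Type*} [Fintype ι] [DecidableEq ι]
    {M : Matrix ι ι ℝ} (hM : M ∈ rowStochastic ℝ ι) {w : ι → ℝ} (hw : w ≠ 0) {l : ℝ}
    (h : M *ᵥ w = l • w) : |l| ≤ 1 := by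
  obtain ⟨x, hx⟩ := Function.ne_iff.1 hw
  have : Nonempty ι := ⟨x⟩
  obtain ⟨x₀, -, hx₀⟩ := exists_max_image univ (fun x => |w x|) univ_nonempty
  have hpos : 0 < |w x₀| := (abs_pos.2 hx).trans_le (hx₀ x (mem_univ x))
  refine le_of_mul_le_mul_right ?_ hpos
  calc |l| * |w x₀| = |∑ y, M x₀ y * w y| := by
        rw [← abs_mul, ← smul_eq_mul, ← Pi.smul_apply, ← h]; rfl
    _ ≤ ∑ y, M x₀ y * |w y| := by
        refine (abs_sum_le_sum_abs _ _).trans_eq (sum_congr rfl fun y _ => ?_)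
        rw [abs_mul, abs_of_nonneg (nonneg_of_mem_rowStochastic hM)]
    _ ≤ ∑ y, M x₀ y * |w x₀| :=
        sum_le_sum fun y _ => mul_le_mul_of_nonneg_left (hx₀ y (mem_univ y))
          (nonneg_of_mem_rowStochastic hM)
    _ = 1 * |w x₀| := by rw [← sum_mul, sum_row_of_mem_rowStochastic hM]

lemma apply_eq_of_mulVec_eq_self_of_isMax {ι : Type*} [Fintype ι] [DecidableEq ι]
    {M : Matrix ι ι ℝ} (hM : M ∈ rowStochastic ℝ ι) {w : ι → ℝ} (h : M *ᵥ w = w) {x y : ι}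
    (hx : ∀ z, w z ≤ w x) (hxy : 0 < M x y) : w y = w x := by
  have hzero : ∑ z, M x z * (w x - w z) = 0 := by
    have hx' := congrFun h x
    simp only [mulVec, dotProduct] at hx'
    simp only [mul_sub, sum_sub_distrib, ← sum_mul, sum_row_of_mem_rowStochastic hM, hx']
    ring
  have hterm := (sum_eq_zero_iff_of_nonneg fun z _ =>
    mul_nonneg (nonneg_of_mem_rowStochastic hM) (sub_nonneg.2 (hx z))).1 hzero y (mem_univ y)
  linarith [(mul_eq_zero.1 hterm).resolve_left hxy.ne']

lemma MatIrreducible.eq_of_mulVec_eq_self {n : ℕ} {P : Matrix (Fin n) (Fin n) ℝ}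
    (hirr : MatIrreducible P) (hP : IsStochastic P) {w : Fin n → ℝ} (h : P *ᵥ w = w)
    (x y : Fin n) : w x = w y := by
  have : Nonempty (Fin n) := ⟨x⟩
  obtain ⟨x₀, -, hx₀⟩ := exists_max_image univ w univ_nonempty
  have hmax (z : Fin n) : w z = w x₀ := by
    obtain ⟨k, hk⟩ := hirr x₀ z
    have hk' : (P ^ k) *ᵥ w = w := by
      simpa using mulVec_pow_of_mulVec_eq_smul (l := 1) (by simpa using h) k
    exact apply_eq_of_mulVec_eq_self_of_isMax (pow_mem hP.mem_rowStochastic k) hk'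
      (fun z => hx₀ z (mem_univ z)) hk
  rw [hmax x, hmax y]

section Orthonormal

variable {n : ℕ} {π : Fin n → ℝ}

lemma pInner_comm (f g : Fin n → ℝ) : pInner π f g = pInner π g f := by
  simp only [pInner, mul_comm (f _)]

lemma pInner_sum_smul_left {ι : Type*} (s : Finset ι) (c : ι → ℝ) (u : ι → Fin n → ℝ)
    (g : Fin n → ℝ) : pInner π (∑ i ∈ s, c i • u i) g = ∑ i ∈ s, c i * pInner π (u i) g := by
  simp only [pInner, Finset.sum_apply, Pi.smul_apply, smul_eq_mul, sum_mul, mul_sum]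
  rw [sum_comm]
  exact sum_congr rfl fun _ _ => sum_congr rfl fun _ _ => by ring

variable {v : Fin n → Fin n → ℝ}

lemma pInner_sum_smul_left_of_orthonormal
    (hortho : ∀ i j, pInner π (v i) (v j) = if i = j then 1 else 0)
    (s : Finset (Fin n)) (c : Fin n → ℝ) (m : Fin n) :
    pInner π (∑ i ∈ s, c i • v i) (v m) = if m ∈ s then c m else 0 := by
  simp [pInner_sum_smul_left, hortho]

lemma pInner_sum_smul_of_orthonormal
    (hortho : ∀ i j, pInner π (v i) (v j) = if i = j then 1 else 0)
    (s : Finset (Fin n)) (c d : Fin n → ℝ) :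
    pInner π (∑ i ∈ s, c i • v i) (∑ j ∈ s, d j • v j) = ∑ i ∈ s, c i * d i := by
  rw [pInner_comm, pInner_sum_smul_left]
  refine sum_congr rfl fun i hi => ?_
  rw [pInner_comm, pInner_sum_smul_left_of_orthonormal hortho, if_pos hi, mul_comm]

lemma ne_const_of_orthonormal [NeZero n]
    (hortho : ∀ i j, pInner π (v i) (v j) = if i = j then 1 else 0)
    (hv1 : v 0 = fun _ => 1) {i : Fin n} (hi : i ≠ 0) (c : ℝ) : v i ≠ fun _ => c := by
  intro hc
  have hself := hortho i i
  have hperp := hortho i 0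
  rw [if_pos rfl] at hself
  rw [if_neg hi] at hperp
  have hscale : pInner π (v i) (v i) = c * pInner π (v i) (v 0) := by
    simp only [pInner, hc, hv1, mul_sum]
    exact sum_congr rfl fun _ _ => by ring
  rw [hself, hperp, mul_zero] at hscale
  exact one_ne_zero hscale

end Orthonormal

lemma eigenvalue_mem_Ico_of_orthonormal_eigenbasis {n : ℕ} [NeZero n] {π : Fin n → ℝ}
    {P : Matrix (Fin n) (Fin n) ℝ} (hP : IsStochastic P) (hirr : MatIrreducible P)
    {v : Fin n → Fin n → ℝ} {lam : Fin n → ℝ}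
    (hortho : ∀ i j, pInner π (v i) (v j) = if i = j then 1 else 0)
    (heig : ∀ i, P *ᵥ v i = lam i • v i) (hv1 : v 0 = fun _ => 1) {i : Fin n} (hi : i ≠ 0) :
    lam i ∈ Set.Ico (-1) 1 := by
  have hvi : v i ≠ 0 := by
    intro h
    simpa [pInner, h] using hortho i i
  obtain ⟨hge, hle⟩ := abs_le.1 (abs_le_one_of_mulVec_eq_smul hP.mem_rowStochastic hvi (heig i))
  refine ⟨hge, hle.lt_of_ne fun h1 => ?_⟩
  have hharm : P *ᵥ v i = v i := by rw [heig i, h1, one_smul]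
  exact ne_const_of_orthonormal hortho hv1 hi (v i 0)
    (funext fun x => hirr.eq_of_mulVec_eq_self hP hharm x 0)

lemma autocov_eq_pInner {n : ℕ} (π : Fin n → ℝ) (P : Matrix (Fin n) (Fin n) ℝ)
    (f : Fin n → ℝ) (k : ℕ) :
    autocov π P f k = pInner π (fun x => f x - ∑ z, π z * f z)
      ((P ^ k) *ᵥ fun x => f x - ∑ z, π z * f z) := by
  simp only [autocov, pInner, mulVec, dotProduct, mul_sum, sum_mul]
  exact sum_congr rfl fun _ _ => sum_congr rfl fun _ _ => by ring

lemma autocov_eq_sum_of_orthonormal_eigenbasis {n : ℕ} [NeZero n] {π : Fin n → ℝ}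
    {P : Matrix (Fin n) (Fin n) ℝ} {v : Fin n → Fin n → ℝ} {lam : Fin n → ℝ}
    (hortho : ∀ i j, pInner π (v i) (v j) = if i = j then 1 else 0)
    (heig : ∀ i, P *ᵥ v i = lam i • v i) (hv1 : v 0 = fun _ => 1)
    {f a : Fin n → ℝ} (hf : f = ∑ i, a i • v i) (k : ℕ) :
    autocov π P f k = ∑ m ∈ univ.erase 0, a m ^ 2 * lam m ^ k := by
  have hmean : ∑ z, π z * f z = a 0 := by
    have h := pInner_sum_smul_left_of_orthonormal hortho univ a 0
    rw [← hf, if_pos (mem_univ 0), hv1] at h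
    simpa [pInner, mul_comm] using h
  have hcentered : (fun x => f x - ∑ z, π z * f z) = ∑ m ∈ univ.erase 0, a m • v m := by
    ext x
    rw [hmean]
    simp [hf, hv1, sum_erase_eq_sub, Finset.sum_apply]
  have hevolve : (P ^ k) *ᵥ ∑ m ∈ univ.erase 0, a m • v m
      = ∑ m ∈ univ.erase 0, (a m * lam m ^ k) • v m := by
    simp only [mulVec_sum, mulVec_smul, mulVec_pow_of_mulVec_eq_smul (heig _), smul_smul]
  rw [autocov_eq_pInner, hcentered, hevolve, pInner_sum_smul_of_orthonormal hortho]
  exact sum_congr rfl fun _ _ => by ring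

lemma varN_eq_sum_of_autocov_eq {n : ℕ} {π : Fin n → ℝ} {P : Matrix (Fin n) (Fin n) ℝ}
    {f : Fin n → ℝ} {ι : Type*} {s : Finset ι} {c μ : ι → ℝ}
    (h : ∀ k, autocov π P f k = ∑ m ∈ s, c m * μ m ^ k) (N : ℕ) :
    varN π P f N = ∑ m ∈ s, c m * ((N : ℝ)⁻¹ * powDistSum (μ m) N) := by
  simp only [varN, powDistSum, h, mul_sum]
  calc _ = ∑ i ∈ range N, ∑ m ∈ s, ∑ j ∈ range N,
        (N : ℝ)⁻¹ * (c m * μ m ^ (max i j - min i j)) := sum_congr rfl fun _ _ => sum_comm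
    _ = _ := sum_comm.trans <| sum_congr rfl fun _ _ => sum_congr rfl fun _ _ =>
        sum_congr rfl fun _ _ => by ring

theorem stmt2_general {n : ℕ} [NeZero n] (π : Fin n → ℝ) (P : Matrix (Fin n) (Fin n) ℝ)
    (hP : IsStochastic P) (hirr : MatIrreducible P)
    (v : Fin n → Fin n → ℝ) (lam : Fin n → ℝ)
    (hortho : ∀ i j, pInner π (v i) (v j) = if i = j then 1 else 0)
    (heig : ∀ i, P.mulVec (v i) = lam i • v i)
    (hv1 : v 0 = fun _ => 1)
    (f a : Fin n → ℝ) (hf : f = fun x => ∑ i, a i * v i x) :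
    HasAsymptVar π P f
      (∑ i ∈ Finset.univ.erase (0 : Fin n), a i ^ 2 * (1 + lam i) / (1 - lam i)) := by
  have hf' : f = ∑ i, a i • v i := by
    ext x
    simp [hf, Finset.sum_apply]
  have hvar := varN_eq_sum_of_autocov_eq
    (autocov_eq_sum_of_orthonormal_eigenbasis hortho heig hv1 hf')
  rw [HasAsymptVar, funext hvar]
  refine tendsto_finsetSum _ fun m hm => ?_
  obtain ⟨hge, hlt⟩ := eigenvalue_mem_Ico_of_orthonormal_eigenbasis hP hirr hortho heig hv1
    (ne_of_mem_erase hm)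
  simpa only [mul_div_assoc] using (tendsto_inv_mul_powDistSum hge hlt).const_mul (a m ^ 2)

theorem stmt2 {n : ℕ} [NeZero n] (π : Fin n → ℝ) (P : Matrix (Fin n) (Fin n) ℝ)
    (hπpos : ∀ x, 0 < π x) (hπsum : ∑ x, π x = 1)
    (hP : IsStochastic P) (hirr : MatIrreducible P) (hrev : IsReversible π P)
    (v : Fin n → Fin n → ℝ) (lam : Fin n → ℝ)
    (hortho : ∀ i j, pInner π (v i) (v j) = if i = j then 1 else 0)
    (heig : ∀ i, P.mulVec (v i) = lam i • v i)
    (hlam1 : lam 0 = 1) (hv1 : v 0 = fun _ => 1)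
    (hmono : Antitone lam)
    (f a : Fin n → ℝ) (hf : f = fun x => ∑ i, a i * v i x)
    (hmean : ∑ x, π x * f x = 0) :
    HasAsymptVar π P f
      (∑ i ∈ Finset.univ.erase (0 : Fin n), a i ^ 2 * (1 + lam i) / (1 - lam i)) :=
  stmt2_general π P hP hirr v lam hortho heig hv1 f a hf
end

section
/- Let P_1,…,P_ℓ and P'_1,…,P'_ℓ be transition matrices reversible with respect to π (not necessarily irreducible), let a_k > 0 with Σ_k a_k = 1, and set P = Σ_k a_k P_k and P' = Σ_k a_k P'_k. If P and P' are irreducible and for each k the matrix P_k − P'_k has all eigenvalues non-negative, then P' efficiency-dominates P. -/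
open Matrix BigOperators Filter

/-!
Conjugating by `diag √π` turns a π-reversible matrix `Q` into a symmetric matrix
`S(Q) = sqrtConj π Q` with the same real eigenvalues. Hence every `S(P_k) - S(P'_k)` is positive semidefinite and
`S(P') ≤ S(P)` in the Loewner order, while `1 - S(P)` is positive semidefinite because
stochastic matrices have spectrum in `[-1, 1]`.

In an eigenbasis of `S = S(P)`, with `g = √π (f - π f)` and `c_e = ⟨u_e, g⟩`, the finite-horizon
variance is `∑_e c_e² (1/N) ∑_{i,j<N} λ_e^|i-j|`. The weight at `λ_e = 1` grows like `N` and the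
others converge to `(1 + λ_e) / (1 - λ_e)`, so if the variance converges then `c_e = 0` whenever
`λ_e = 1` and the limit is `2 ⟨g, y⟩ - ⟨g, g⟩` with `(1 - S) y = g`. Since inversion is antitone in
the Loewner order and `1 - S(P) ≤ 1 - S(P')`, this gives `v(f, P') ≤ v(f, P)`.
-/

open Topology
open scoped MatrixOrder

namespace Matrix.IsHermitian

variable {ι : Type*} [Fintype ι] [DecidableEq ι] {A : Matrix ι ι ℝ} (hA : A.IsHermitian)

lemma eigenvectorBasis_ne_zero (e : ι) : ⇑(hA.eigenvectorBasis e) ≠ 0 := by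
  intro h
  exact hA.eigenvectorBasis.orthonormal.ne_zero e (by ext i; simp [h])

lemma eigenvectorBasis_dotProduct_eq_inner (x : ι → ℝ) (e : ι) :
    ⇑(hA.eigenvectorBasis e) ⬝ᵥ x = inner ℝ (hA.eigenvectorBasis e) (WithLp.toLp 2 x) := by
  simp [EuclideanSpace.inner_eq_star_dotProduct, dotProduct_comm]

lemma sum_eigenvectorBasis_dotProduct_smul (x : ι → ℝ) :
    ∑ e, (⇑(hA.eigenvectorBasis e) ⬝ᵥ x) • ⇑(hA.eigenvectorBasis e) = x := by
  simpa [eigenvectorBasis_dotProduct_eq_inner] using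
    congrArg WithLp.ofLp (hA.eigenvectorBasis.sum_repr' (WithLp.toLp 2 x))

lemma dotProduct_eq_sum_eigenvectorBasis (x y : ι → ℝ) :
    x ⬝ᵥ y = ∑ e, (⇑(hA.eigenvectorBasis e) ⬝ᵥ x) * (⇑(hA.eigenvectorBasis e) ⬝ᵥ y) := by
  have := hA.eigenvectorBasis.sum_inner_mul_inner (WithLp.toLp 2 x) (WithLp.toLp 2 y)
  simp only [EuclideanSpace.inner_eq_star_dotProduct, star_trivial] at this
  simp_rw [dotProduct_comm x, ← this, dotProduct_comm y]

lemma eigenvectorBasis_dotProduct_mulVec (e : ι) (x : ι → ℝ) :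
    ⇑(hA.eigenvectorBasis e) ⬝ᵥ A *ᵥ x = hA.eigenvalues e * (⇑(hA.eigenvectorBasis e) ⬝ᵥ x) := by
  rw [dotProduct_mulVec, ← mulVec_transpose, ← conjTranspose_eq_transpose_of_trivial, hA.eq,
    mulVec_eigenvectorBasis, smul_dotProduct, smul_eq_mul]

lemma eigenvectorBasis_dotProduct_pow_mulVec (e : ι) (x : ι → ℝ) (k : ℕ) :
    ⇑(hA.eigenvectorBasis e) ⬝ᵥ (A ^ k) *ᵥ x
      = hA.eigenvalues e ^ k * (⇑(hA.eigenvectorBasis e) ⬝ᵥ x) := by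
  induction k with
  | zero => simp
  | succ k ih =>
    rw [pow_succ', ← mulVec_mulVec, eigenvectorBasis_dotProduct_mulVec, ih]
    ring

lemma dotProduct_pow_mulVec_self (x : ι → ℝ) (k : ℕ) :
    x ⬝ᵥ (A ^ k) *ᵥ x = ∑ e, hA.eigenvalues e ^ k * (⇑(hA.eigenvectorBasis e) ⬝ᵥ x) ^ 2 := by
  rw [dotProduct_eq_sum_eigenvectorBasis hA]
  congr! 1 with e
  rw [eigenvectorBasis_dotProduct_pow_mulVec]
  ring

-- The junk value `c / 0 = 0` takes care of the eigenvalue `1`, where `g` has no component.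
lemma exists_one_sub_mulVec_eq {g : ι → ℝ}
    (hg : ∀ e, hA.eigenvalues e = 1 → ⇑(hA.eigenvectorBasis e) ⬝ᵥ g = 0) :
    ∃ y, (1 - A) *ᵥ y = g ∧
      g ⬝ᵥ y = ∑ e, (⇑(hA.eigenvectorBasis e) ⬝ᵥ g) ^ 2 / (1 - hA.eigenvalues e) := by
  set u := fun e => ⇑(hA.eigenvectorBasis e)
  refine ⟨∑ e, ((u e ⬝ᵥ g) / (1 - hA.eigenvalues e)) • u e, ?_, ?_⟩
  · have h1 : ∀ e, (1 - A) *ᵥ u e = (1 - hA.eigenvalues e) • u e := fun e => by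
      rw [sub_mulVec, one_mulVec, mulVec_eigenvectorBasis, sub_smul, one_smul]
    conv_rhs => rw [← sum_eigenvectorBasis_dotProduct_smul hA g]
    simp only [mulVec_sum, mulVec_smul, h1, smul_smul]
    refine Finset.sum_congr rfl fun e _ => ?_
    by_cases he : hA.eigenvalues e = 1
    · simp [he, hg e he]
    · exact congrArg (· • u e) (div_mul_cancel₀ _ (sub_ne_zero.2 (Ne.symm he)))
  · simp only [dotProduct_sum, dotProduct_smul, smul_eq_mul]
    refine Finset.sum_congr rfl fun e _ => ?_
    rw [dotProduct_comm]
    ring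

lemma posSemidef_of_eigenvalue_nonneg (hA : A.IsHermitian)
    (h : ∀ (μ : ℝ) (v : ι → ℝ), v ≠ 0 → A *ᵥ v = μ • v → 0 ≤ μ) : A.PosSemidef :=
  hA.posSemidef_iff_eigenvalues_nonneg.2 fun e =>
    h _ _ (hA.eigenvectorBasis_ne_zero e) (hA.mulVec_eigenvectorBasis e)

end Matrix.IsHermitian

-- Antitonicity of inversion in the Loewner order, tested against `g`; `M` need not be invertible.
lemma Matrix.dotProduct_le_of_mulVec_eq_of_le {ι : Type*} [Fintype ι] {M N : Matrix ι ι ℝ}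
    (hM : 0 ≤ M) (hMN : M ≤ N) {g y y' : ι → ℝ} (hy : M *ᵥ y = g) (hy' : N *ᵥ y' = g) :
    g ⬝ᵥ y' ≤ g ⬝ᵥ y := by
  have hM' := hM.posSemidef
  have hsymm : y ⬝ᵥ M *ᵥ y' = g ⬝ᵥ y' := by
    rw [dotProduct_mulVec, ← mulVec_transpose, ← conjTranspose_eq_transpose_of_trivial,
      hM'.isHermitian.eq, hy]
  have hdiff := hM'.dotProduct_mulVec_nonneg (y - y')
  have hN := (Matrix.le_iff.1 hMN).dotProduct_mulVec_nonneg y'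
  simp only [star_trivial, mulVec_sub, sub_dotProduct, dotProduct_sub, sub_mulVec] at hdiff hN
  rw [hy, hsymm, dotProduct_comm y, dotProduct_comm y'] at hdiff
  rw [hy', dotProduct_comm y'] at hN
  linarith

-- The normalized entry sum of the Kac–Murdock–Szegő matrix `(l ^ |i - j|)_{i,j<N}`.
noncomputable def kmsAverage (l : ℝ) (N : ℕ) : ℝ :=
  (N : ℝ)⁻¹ * ∑ i ∈ Finset.range N, ∑ j ∈ Finset.range N, l ^ (max i j - min i j)

lemma kmsAverage_one (N : ℕ) : kmsAverage 1 N = N := by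
  rcases eq_or_ne (N : ℝ) 0 with hN | hN
  · simp [kmsAverage, hN]
  · simp [kmsAverage]
    field_simp

lemma sum_range_pow_sub {l : ℝ} (hl : l ≠ 1) (N : ℕ) :
    ∑ i ∈ Finset.range N, l ^ (N - i) = l * (1 - l ^ N) / (1 - l) := by
  rw [← Finset.sum_range_reflect, Finset.sum_congr rfl fun i hi => by
    rw [show N - (N - 1 - i) = i + 1 by have := Finset.mem_range.1 hi; omega]]
  simp only [pow_succ', ← Finset.mul_sum, geom_sum_eq hl]
  field_simp [sub_ne_zero.2 hl, sub_ne_zero.2 (Ne.symm hl)]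
  ring

lemma sum_range_sum_range_pow_dist {l : ℝ} (hl : l ≠ 1) (N : ℕ) :
    ∑ i ∈ Finset.range N, ∑ j ∈ Finset.range N, l ^ (max i j - min i j)
      = N * ((1 + l) / (1 - l)) - 2 * l * (1 - l ^ N) / (1 - l) ^ 2 := by
  induction N with
  | zero => simp
  | succ N ih =>
    have hrow : ∀ i ∈ Finset.range N, l ^ (max i N - min i N) = l ^ (N - i) := fun i hi => by
      rw [max_eq_right (Finset.mem_range.1 hi).le, min_eq_left (Finset.mem_range.1 hi).le]
    have hcol : ∀ j ∈ Finset.range N, l ^ (max N j - min N j) = l ^ (N - j) := fun j hj => by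
      rw [max_eq_left (Finset.mem_range.1 hj).le, min_eq_right (Finset.mem_range.1 hj).le]
    simp only [Finset.sum_range_succ, Finset.sum_add_distrib, ih, Finset.sum_congr rfl hrow,
      Finset.sum_congr rfl hcol, sum_range_pow_sub hl, max_self, min_self, Nat.sub_self, pow_zero]
    push_cast
    field_simp
    ring

lemma tendsto_kmsAverage {l : ℝ} (hl : |l| ≤ 1) (hl1 : l ≠ 1) :
    Tendsto (kmsAverage l) atTop (𝓝 ((1 + l) / (1 - l))) := by
  have hinv : Tendsto (fun N : ℕ => (N : ℝ)⁻¹) atTop (𝓝 0) :=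
    tendsto_inv_atTop_zero.comp tendsto_natCast_atTop_atTop
  have hpow : Tendsto (fun N : ℕ => (N : ℝ)⁻¹ * l ^ N) atTop (𝓝 0) := by
    refine squeeze_zero_norm (fun N => ?_) hinv
    rw [norm_mul, norm_inv, Real.norm_natCast, norm_pow, Real.norm_eq_abs]
    exact mul_le_of_le_one_right (by positivity) (pow_le_one₀ (abs_nonneg l) hl)
  have hlim := (tendsto_const_nhds (x := (1 + l) / (1 - l))).sub
    ((hinv.sub hpow).const_mul (2 * l / (1 - l) ^ 2))
  rw [sub_zero, mul_zero, sub_zero] at hlim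
  refine hlim.congr' ?_
  filter_upwards [eventually_ne_atTop 0] with N hN
  rw [kmsAverage, sum_range_sum_range_pow_dist hl1]
  field_simp

lemma tendsto_kmsAverage_div {l : ℝ} (hl : |l| ≤ 1) :
    Tendsto (fun N => kmsAverage l N / N) atTop (𝓝 (if l = 1 then 1 else 0)) := by
  split_ifs with hl1
  · refine tendsto_const_nhds.congr' ?_
    filter_upwards [eventually_ne_atTop 0] with N hN
    rw [hl1, kmsAverage_one, div_self (Nat.cast_ne_zero.2 hN)]
  · simpa using (tendsto_kmsAverage hl hl1).div_atTop tendsto_natCast_atTop_atTop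

-- Since `kmsAverage 1 N = N`, convergence forces the weights at `l e = 1` to vanish.
lemma eq_of_tendsto_sum_mul_kmsAverage {ι : Type*} [Fintype ι] {l c : ι → ℝ}
    (hl : ∀ e, |l e| ≤ 1) (hc : ∀ e, 0 ≤ c e) {v : ℝ}
    (h : Tendsto (fun N => ∑ e, c e * kmsAverage (l e) N) atTop (𝓝 v)) :
    (∀ e, l e = 1 → c e = 0) ∧ v = ∑ e, c e * ((1 + l e) / (1 - l e)) := by
  have hdiv : Tendsto (fun N : ℕ => ∑ e, c e * (kmsAverage (l e) N / N)) atTop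
      (𝓝 (∑ e, c e * if l e = 1 then 1 else 0)) :=
    tendsto_finsetSum _ fun e _ => (tendsto_kmsAverage_div (hl e)).const_mul _
  have hzero : ∑ e, c e * (if l e = 1 then 1 else 0) = 0 := by
    refine tendsto_nhds_unique hdiv ?_
    simpa [Finset.sum_div, mul_div_assoc] using h.div_atTop tendsto_natCast_atTop_atTop
  have hker : ∀ e, l e = 1 → c e = 0 := fun e he => by
    have hterm := (Finset.sum_eq_zero_iff_of_nonneg fun e _ =>
      mul_nonneg (hc e) (by split_ifs <;> norm_num)).1 hzero e (Finset.mem_univ e)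
    simpa [he] using hterm
  refine ⟨hker, tendsto_nhds_unique h (tendsto_finsetSum _ fun e _ => ?_)⟩
  by_cases he : l e = 1
  · simp [hker e he]
  · exact (tendsto_kmsAverage (hl e) he).const_mul _

section SqrtConj

variable {ι : Type*} [Fintype ι] [DecidableEq ι]

-- The matrix of `P`, acting on `L²(π)`, in the orthonormal basis `δ_x / √(π x)`; it is symmetric
-- exactly when `P` is π-reversible.
noncomputable def sqrtConj (π : ι → ℝ) (P : Matrix ι ι ℝ) : Matrix ι ι ℝ :=
  diagonal (fun x => √(π x)) * P * diagonal (fun x => (√(π x))⁻¹)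

variable {π : ι → ℝ}

lemma sqrtConj_apply (P : Matrix ι ι ℝ) (x y : ι) :
    sqrtConj π P x y = √(π x) * P x y * (√(π y))⁻¹ := by
  simp [sqrtConj, diagonal_mul, mul_diagonal]

lemma diagonal_inv_sqrt_mul_diagonal_sqrt (hπ : ∀ x, 0 < π x) :
    diagonal (fun x => (√(π x))⁻¹) * diagonal (fun x => √(π x)) = 1 := by
  rw [diagonal_mul_diagonal, ← diagonal_one]
  exact congrArg diagonal (funext fun x => inv_mul_cancel₀ (Real.sqrt_pos.2 (hπ x)).ne')

lemma sqrtConj_one (hπ : ∀ x, 0 < π x) : sqrtConj π 1 = 1 := by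
  rw [sqrtConj, Matrix.mul_one, diagonal_mul_diagonal, ← diagonal_one]
  exact congrArg diagonal (funext fun x => mul_inv_cancel₀ (Real.sqrt_pos.2 (hπ x)).ne')

lemma sqrtConj_pow (hπ : ∀ x, 0 < π x) (P : Matrix ι ι ℝ) (k : ℕ) :
    sqrtConj π P ^ k = sqrtConj π (P ^ k) := by
  induction k with
  | zero => rw [pow_zero, pow_zero, sqrtConj_one hπ]
  | succ k ih =>
    rw [pow_succ, ih, pow_succ]
    simp only [sqrtConj, Matrix.mul_assoc]
    rw [← Matrix.mul_assoc (diagonal _) (diagonal _), diagonal_inv_sqrt_mul_diagonal_sqrt hπ,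
      Matrix.one_mul]

lemma sqrtConj_sub (P Q : Matrix ι ι ℝ) : sqrtConj π (P - Q) = sqrtConj π P - sqrtConj π Q := by
  simp [sqrtConj, mul_sub, sub_mul]

lemma sqrtConj_sum {κ : Type*} (s : Finset κ) (a : κ → ℝ) (P : κ → Matrix ι ι ℝ) :
    sqrtConj π (∑ k ∈ s, a k • P k) = ∑ k ∈ s, a k • sqrtConj π (P k) := by
  simp [sqrtConj, Finset.mul_sum, Finset.sum_mul]

lemma mulVec_eq_smul_of_sqrtConj (hπ : ∀ x, 0 < π x) {P : Matrix ι ι ℝ} {μ : ℝ} {u : ι → ℝ}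
    (hu : sqrtConj π P *ᵥ u = μ • u) :
    P *ᵥ (diagonal (fun x => (√(π x))⁻¹) *ᵥ u) = μ • (diagonal (fun x => (√(π x))⁻¹) *ᵥ u) := by
  have h := congrArg (diagonal (fun x => (√(π x))⁻¹) *ᵥ ·) hu
  simpa only [sqrtConj, mulVec_mulVec, mulVec_smul, ← Matrix.mul_assoc,
    diagonal_inv_sqrt_mul_diagonal_sqrt hπ, Matrix.one_mul] using h

end SqrtConj

section Markov

variable {n : ℕ} {π : Fin n → ℝ}

lemma isReversible_one : IsReversible π 1 := fun x y => by
  rcases eq_or_ne x y with rfl | h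
  · rfl
  · simp [one_apply_ne h, one_apply_ne h.symm]

lemma IsReversible.sub {P Q : Matrix (Fin n) (Fin n) ℝ} (hP : IsReversible π P)
    (hQ : IsReversible π Q) : IsReversible π (P - Q) := fun x y => by
  simp only [Matrix.sub_apply, mul_sub, hP x y, hQ x y]

lemma IsReversible.sum_smul {ℓ : ℕ} {P : Fin ℓ → Matrix (Fin n) (Fin n) ℝ} (a : Fin ℓ → ℝ)
    (hP : ∀ k, IsReversible π (P k)) : IsReversible π (∑ k, a k • P k) := fun x y => by
  simp only [Matrix.sum_apply, Matrix.smul_apply, smul_eq_mul, Finset.mul_sum]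
  exact Finset.sum_congr rfl fun k _ => by rw [mul_left_comm, hP k x y, mul_left_comm]

lemma IsStochastic.sum_smul {ℓ : ℕ} {P : Fin ℓ → Matrix (Fin n) (Fin n) ℝ} {a : Fin ℓ → ℝ}
    (hP : ∀ k, IsStochastic (P k)) (ha : ∀ k, 0 ≤ a k) (hasum : ∑ k, a k = 1) :
    IsStochastic (∑ k, a k • P k) := by
  refine ⟨fun x y => ?_, fun x => ?_⟩
  · simp only [Matrix.sum_apply, Matrix.smul_apply, smul_eq_mul]
    exact Finset.sum_nonneg fun k _ => mul_nonneg (ha k) ((hP k).1 x y)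
  · simp only [Matrix.sum_apply, Matrix.smul_apply, smul_eq_mul]
    rw [Finset.sum_comm]
    simp [← Finset.mul_sum, (hP _).2 x, hasum]

-- Evaluate `P v = μ v` at a coordinate where `|v|` is largest.
lemma IsStochastic.abs_le_one_of_mulVec_eq_smul {P : Matrix (Fin n) (Fin n) ℝ}
    (hP : IsStochastic P) {μ : ℝ} {v : Fin n → ℝ} (hv : P *ᵥ v = μ • v) (hv0 : v ≠ 0) :
    |μ| ≤ 1 := by
  obtain ⟨x, hx⟩ := Function.ne_iff.1 hv0
  obtain ⟨x₀, -, hx₀⟩ := Finset.exists_max_image Finset.univ (fun x => |v x|) ⟨x, Finset.mem_univ x⟩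
  have hpos : 0 < |v x₀| := (abs_pos.2 hx).trans_le (hx₀ x (Finset.mem_univ x))
  refine le_of_mul_le_mul_right ?_ hpos
  calc |μ| * |v x₀| = |∑ y, P x₀ y * v y| := by
        rw [← abs_mul, ← smul_eq_mul, ← Pi.smul_apply, ← hv]; rfl
    _ ≤ ∑ y, P x₀ y * |v x₀| := by
        refine (Finset.abs_sum_le_sum_abs _ _).trans (Finset.sum_le_sum fun y _ => ?_)
        rw [abs_mul, abs_of_nonneg (hP.1 x₀ y)]
        exact mul_le_mul_of_nonneg_left (hx₀ y (Finset.mem_univ y)) (hP.1 x₀ y)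
    _ = 1 * |v x₀| := by rw [← Finset.sum_mul, hP.2 x₀]

lemma isHermitian_sqrtConj (hπ : ∀ x, 0 < π x) {P : Matrix (Fin n) (Fin n) ℝ}
    (hrev : IsReversible π P) : (sqrtConj π P).IsHermitian := by
  ext x y
  have hx := Real.sqrt_pos.2 (hπ x)
  have hy := Real.sqrt_pos.2 (hπ y)
  simp only [conjTranspose_apply, star_trivial, sqrtConj_apply]
  field_simp
  rw [Real.sq_sqrt (hπ x).le, Real.sq_sqrt (hπ y).le]
  linarith [hrev x y]

lemma exists_eigenpair_of_sqrtConj (hπ : ∀ x, 0 < π x) {P : Matrix (Fin n) (Fin n) ℝ} {μ : ℝ}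
    {u : Fin n → ℝ} (hu0 : u ≠ 0) (hu : sqrtConj π P *ᵥ u = μ • u) :
    ∃ v ≠ 0, P *ᵥ v = μ • v := by
  refine ⟨_, fun h => hu0 ?_, mulVec_eq_smul_of_sqrtConj hπ hu⟩
  ext x
  have := congrFun h x
  simp only [mulVec_diagonal, Pi.zero_apply] at this
  exact (mul_eq_zero.1 this).resolve_left (inv_ne_zero (Real.sqrt_pos.2 (hπ x)).ne')

lemma posSemidef_sqrtConj (hπ : ∀ x, 0 < π x) {Q : Matrix (Fin n) (Fin n) ℝ}
    (hrev : IsReversible π Q) (heig : ∀ (μ : ℝ) (v : Fin n → ℝ), v ≠ 0 → Q *ᵥ v = μ • v → 0 ≤ μ) :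
    (sqrtConj π Q).PosSemidef :=
  (isHermitian_sqrtConj hπ hrev).posSemidef_of_eigenvalue_nonneg fun μ u hu0 hu => by
    obtain ⟨v, hv0, hv⟩ := exists_eigenpair_of_sqrtConj hπ hu0 hu
    exact heig μ v hv0 hv

lemma IsStochastic.abs_eigenvalues_sqrtConj_le_one (hπ : ∀ x, 0 < π x)
    {P : Matrix (Fin n) (Fin n) ℝ} (hP : IsStochastic P) (hS : (sqrtConj π P).IsHermitian)
    (e : Fin n) : |hS.eigenvalues e| ≤ 1 := by
  obtain ⟨v, hv0, hv⟩ := exists_eigenpair_of_sqrtConj hπ (hS.eigenvectorBasis_ne_zero e)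
    (hS.mulVec_eigenvectorBasis e)
  exact hP.abs_le_one_of_mulVec_eq_smul hv hv0

lemma IsStochastic.one_sub_sqrtConj_nonneg (hπ : ∀ x, 0 < π x) {P : Matrix (Fin n) (Fin n) ℝ}
    (hP : IsStochastic P) (hrev : IsReversible π P) : 0 ≤ 1 - sqrtConj π P := by
  rw [← sqrtConj_one hπ, ← sqrtConj_sub]
  refine (posSemidef_sqrtConj hπ (isReversible_one.sub hrev)
    fun μ v hv0 hv => ?_).nonneg
  have hPv : P *ᵥ v = (1 - μ) • v := by
    rw [sub_mulVec, one_mulVec] at hv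
    rw [sub_smul, one_smul, ← hv, sub_sub_cancel]
  linarith [(abs_le.1 (hP.abs_le_one_of_mulVec_eq_smul hPv hv0)).2]

end Markov

section AsymptoticVariance

variable {n : ℕ} {π : Fin n → ℝ} {P : Matrix (Fin n) (Fin n) ℝ}

-- `f - π f` in the coordinates `h ↦ √π h`, which turn the inner product of `L²(π)` into `⬝ᵥ`.
noncomputable def sqrtCentered (π f : Fin n → ℝ) : Fin n → ℝ :=
  fun x => √(π x) * (f x - ∑ z, π z * f z)

lemma autocov_eq_dotProduct (hπ : ∀ x, 0 < π x) (f : Fin n → ℝ) (k : ℕ) :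
    autocov π P f k = sqrtCentered π f ⬝ᵥ sqrtConj π P ^ k *ᵥ sqrtCentered π f := by
  rw [sqrtConj_pow hπ]
  simp only [autocov, dotProduct, mulVec, sqrtConj_apply, sqrtCentered, Finset.mul_sum]
  refine Finset.sum_congr rfl fun x _ => Finset.sum_congr rfl fun y _ => ?_
  have hx := Real.sq_sqrt (hπ x).le
  have hy := (Real.sqrt_pos.2 (hπ y)).ne'
  field_simp
  rw [hx]
  ring

lemma varN_eq_sum_mul_kmsAverage (hπ : ∀ x, 0 < π x) (hS : (sqrtConj π P).IsHermitian)
    (f : Fin n → ℝ) (N : ℕ) :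
    varN π P f N = ∑ e, (⇑(hS.eigenvectorBasis e) ⬝ᵥ sqrtCentered π f) ^ 2 *
      kmsAverage (hS.eigenvalues e) N := by
  simp only [varN, kmsAverage, autocov_eq_dotProduct hπ, hS.dotProduct_pow_mulVec_self,
    Finset.mul_sum]
  conv_rhs => rw [Finset.sum_comm]
  refine Finset.sum_congr rfl fun i _ => ?_
  conv_rhs => rw [Finset.sum_comm]
  exact Finset.sum_congr rfl fun j _ => Finset.sum_congr rfl fun e _ => by ring

lemma HasAsymptVar.exists_one_sub_sqrtConj_mulVec_eq (hπ : ∀ x, 0 < π x) (hP : IsStochastic P)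
    (hrev : IsReversible π P) {f : Fin n → ℝ} {v : ℝ} (hv : HasAsymptVar π P f v) :
    ∃ y, (1 - sqrtConj π P) *ᵥ y = sqrtCentered π f ∧
      v = 2 * (sqrtCentered π f ⬝ᵥ y) - sqrtCentered π f ⬝ᵥ sqrtCentered π f := by
  set hS := isHermitian_sqrtConj hπ hrev
  set g := sqrtCentered π f
  obtain ⟨hker, rfl⟩ := eq_of_tendsto_sum_mul_kmsAverage
    (c := fun e => (⇑(hS.eigenvectorBasis e) ⬝ᵥ g) ^ 2)
    (hP.abs_eigenvalues_sqrtConj_le_one hπ hS) (fun e => sq_nonneg _)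
    (by simpa only [HasAsymptVar, funext (varN_eq_sum_mul_kmsAverage hπ hS f)] using hv)
  have hc : ∀ e, hS.eigenvalues e = 1 → ⇑(hS.eigenvectorBasis e) ⬝ᵥ g = 0 := fun e he =>
    pow_eq_zero_iff two_ne_zero |>.1 (hker e he)
  obtain ⟨y, hy, hgy⟩ := hS.exists_one_sub_mulVec_eq hc
  refine ⟨y, hy, ?_⟩
  rw [hgy, hS.dotProduct_eq_sum_eigenvectorBasis g g, Finset.mul_sum, ← Finset.sum_sub_distrib]
  refine Finset.sum_congr rfl fun e _ => ?_
  by_cases he : hS.eigenvalues e = 1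
  · simp [hc e he]
  · have : 1 - hS.eigenvalues e ≠ 0 := sub_ne_zero.2 (Ne.symm he)
    field_simp
    ring

end AsymptoticVariance

theorem stmt10_general {n ℓ : ℕ} (π : Fin n → ℝ)
    (Pk P'k : Fin ℓ → Matrix (Fin n) (Fin n) ℝ) (a : Fin ℓ → ℝ)
    (hπpos : ∀ x, 0 < π x)
    (hPk : ∀ k, IsStochastic (Pk k)) (hP'k : ∀ k, IsStochastic (P'k k))
    (hrevPk : ∀ k, IsReversible π (Pk k)) (hrevP'k : ∀ k, IsReversible π (P'k k))
    (ha : ∀ k, 0 < a k) (hasum : ∑ k, a k = 1)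
    (heig : ∀ k, ∀ (μ : ℝ) (v : Fin n → ℝ), v ≠ 0 →
      (Pk k - P'k k).mulVec v = μ • v → 0 ≤ μ) :
    EffDom π (∑ k, a k • P'k k) (∑ k, a k • Pk k) := by
  intro f vP' vP hvP' hvP
  have ha₀ : ∀ k, 0 ≤ a k := fun k => (ha k).le
  have hP := IsStochastic.sum_smul hPk ha₀ hasum
  have hrevP := IsReversible.sum_smul a hrevPk
  obtain ⟨y', hy', rfl⟩ := hvP'.exists_one_sub_sqrtConj_mulVec_eq hπpos
    (IsStochastic.sum_smul hP'k ha₀ hasum) (IsReversible.sum_smul a hrevP'k)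
  obtain ⟨y, hy, rfl⟩ := hvP.exists_one_sub_sqrtConj_mulVec_eq hπpos hP hrevP
  have hdom : sqrtConj π (∑ k, a k • P'k k) ≤ sqrtConj π (∑ k, a k • Pk k) := by
    rw [le_iff, ← sqrtConj_sub, ← Finset.sum_sub_distrib]
    simp only [← smul_sub, sqrtConj_sum]
    exact posSemidef_sum _ fun k _ =>
      (posSemidef_sqrtConj hπpos ((hrevPk k).sub (hrevP'k k)) (heig k)).smul (ha₀ k)
  have := dotProduct_le_of_mulVec_eq_of_le (hP.one_sub_sqrtConj_nonneg hπpos hrevP)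
    (sub_le_sub_left hdom 1) hy hy'
  linarith

theorem stmt10 {n ℓ : ℕ} (π : Fin n → ℝ)
    (Pk P'k : Fin ℓ → Matrix (Fin n) (Fin n) ℝ) (a : Fin ℓ → ℝ)
    (hπpos : ∀ x, 0 < π x) (hπsum : ∑ x, π x = 1)
    (hPk : ∀ k, IsStochastic (Pk k)) (hP'k : ∀ k, IsStochastic (P'k k))
    (hrevPk : ∀ k, IsReversible π (Pk k)) (hrevP'k : ∀ k, IsReversible π (P'k k))
    (ha : ∀ k, 0 < a k) (hasum : ∑ k, a k = 1)
    (hirrP : MatIrreducible (∑ k, a k • Pk k))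
    (hirrP' : MatIrreducible (∑ k, a k • P'k k))
    (heig : ∀ k, ∀ (μ : ℝ) (v : Fin n → ℝ), v ≠ 0 →
      (Pk k - P'k k).mulVec v = μ • v → 0 ≤ μ) :
    EffDom π (∑ k, a k • P'k k) (∑ k, a k • Pk k) :=
  stmt10_general π Pk P'k a hπpos hPk hP'k hrevPk hrevP'k ha hasum heig
end
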